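/- Let E be a real inner product space, let f : E → ℝ be any function, and let h : E → ℝ be twice continuously differentiable with D²h(x)(v,v) ≥ σ·‖v‖² for all x, v (σ > 0). Let η > 0, let x⁻ ∈ E, and let x₊ be a global minimizer over E of the function x ↦ f(x) + (1/η)·D_h(x, x⁻). Then f(x⁻) − f(x₊) ≥ (σ/(2η))·‖x₊ − x⁻‖². (Sufficient decrease of one Bregman proximal point step.) -/

import Mathlib

open scoped RealInnerProductSpace

/-!
Along the segment `t ↦ x⁻ + t (x₊ − x⁻)` the function `h` has second derivative at least
`σ‖x₊ − x⁻‖²`, so `t ↦ h(x⁻ + t (x₊ − x⁻)) − (σ/2) t² ‖x₊ − x⁻‖²` is convex and lies above its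
tangent at `0`; at `t = 1` this says `D_h(x₊, x⁻) ≥ (σ/2)‖x₊ − x⁻‖²`. Comparing the proximal
objective at its minimizer `x₊` with its value at `x⁻`, where the divergence vanishes, gives
`f(x⁻) ≥ f(x₊) + D_h(x₊, x⁻)/η`.
-/

theorem add_deriv_mul_add_sq_le_of_le_deriv2 {φ φ' φ'' : ℝ → ℝ} {c : ℝ}
    (hφ : ∀ t, HasDerivAt φ (φ' t) t) (hφ' : ∀ t, HasDerivAt φ' (φ'' t) t)
    (hc : ∀ t, c ≤ φ'' t) (a b : ℝ) :
    φ a + φ' a * (b - a) + c / 2 * (b - a) ^ 2 ≤ φ b := by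
  set ψ : ℝ → ℝ := fun t => φ t - c / 2 * t ^ 2
  have hψ : ∀ t, HasDerivAt ψ (φ' t - c * t) t := fun t =>
    ((hφ t).sub ((hasDerivAt_pow 2 t).const_mul (c / 2))).congr_deriv (by ring)
  have hψ' : ∀ t, HasDerivAt (fun t => φ' t - c * t) (φ'' t - c) t := fun t =>
    ((hφ' t).sub ((hasDerivAt_id t).const_mul c)).congr_deriv (by simp)
  have hconvex : ConvexOn ℝ Set.univ ψ := by
    refine convexOn_of_hasDerivWithinAt2_nonneg convex_univ
      (fun t _ => (hψ t).continuousAt.continuousWithinAt)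
      (fun t _ => (hψ t).hasDerivWithinAt) (fun t _ => (hψ' t).hasDerivWithinAt) ?_
    exact fun t _ => sub_nonneg.mpr (hc t)
  have htangent : (φ' a - c * a) * (b - a) ≤ ψ b - ψ a := by
    rcases lt_trichotomy a b with hab | rfl | hab
    · have := hconvex.le_slope_of_hasDerivAt trivial trivial hab (hψ a)
      rwa [slope_def_field, le_div_iff₀ (sub_pos.mpr hab)] at this
    · simp
    · have := hconvex.slope_le_of_hasDerivAt trivial trivial hab (hψ a)
      rw [slope_def_field, div_le_iff₀ (sub_pos.mpr hab)] at this
      linarith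
  simp only [ψ] at htangent
  linarith

theorem hasDerivAt_comp_add_smul {E F : Type*} [NormedAddCommGroup E] [NormedSpace ℝ E]
    [NormedAddCommGroup F] [NormedSpace ℝ F] {g : E → F} (hg : Differentiable ℝ g)
    (x v : E) (t : ℝ) :
    HasDerivAt (fun t : ℝ => g (x + t • v)) (fderiv ℝ g (x + t • v) v) t := by
  have hline : HasDerivAt (fun t : ℝ => x + t • v) v t := by
    simpa using ((hasDerivAt_id t).smul_const v).const_add x
  exact (hg (x + t • v)).hasFDerivAt.comp_hasDerivAt t hline

theorem sq_norm_le_sub_sub_fderiv_of_le_iteratedFDeriv_two {E : Type*} [NormedAddCommGroup E]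
    [NormedSpace ℝ E] {h : E → ℝ} {σ : ℝ} (hh : ContDiff ℝ 2 h)
    (hσ : ∀ x v : E, σ * ‖v‖ ^ 2 ≤ iteratedFDeriv ℝ 2 h x ![v, v]) (x y : E) :
    σ / 2 * ‖y - x‖ ^ 2 ≤ h y - h x - fderiv ℝ h x (y - x) := by
  set v := y - x
  have hd : Differentiable ℝ h := hh.differentiable (by norm_num)
  have hd' : Differentiable ℝ (fderiv ℝ h) :=
    (hh.fderiv_right (m := 1) (by norm_num)).differentiable (by norm_num)
  have key := add_deriv_mul_add_sq_le_of_le_deriv2 (c := σ * ‖v‖ ^ 2)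
    (hasDerivAt_comp_add_smul hd x v)
    (fun t => (hasDerivAt_comp_add_smul hd' x v t).clm_apply (hasDerivAt_const t v))
    (fun t => by simpa [iteratedFDeriv_two_apply] using hσ (x + t • v) v) 0 1
  simp only [zero_smul, add_zero, one_smul, sub_zero, one_pow, mul_one, v,
    add_sub_cancel] at key
  linarith

theorem bregman_ppm_sufficient_decrease_general
    {E : Type*} [NormedAddCommGroup E] [InnerProductSpace ℝ E]
    (f h : E → ℝ) (gh : E → E) (σ η : ℝ)
    (hh : ContDiff ℝ 2 h)
    (hgh : ∀ x v : E, fderiv ℝ h x v = ⟪gh x, v⟫)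
    (hstrong : ∀ x v : E, iteratedFDeriv ℝ 2 h x ![v, v] ≥ σ * ‖v‖ ^ 2)
    (hη : 0 < η)
    (xm xp : E)
    (hmin : ∀ x : E,
      f xp + (1 / η) * (h xp - h xm - ⟪gh xm, xp - xm⟫) ≤
        f x + (1 / η) * (h x - h xm - ⟪gh xm, x - xm⟫)) :
    f xm - f xp ≥ (σ / (2 * η)) * ‖xp - xm‖ ^ 2 := by
  have hbregman : σ / 2 * ‖xp - xm‖ ^ 2 ≤ h xp - h xm - ⟪gh xm, xp - xm⟫ := by
    rw [← hgh]
    exact sq_norm_le_sub_sub_fderiv_of_le_iteratedFDeriv_two hh hstrong xm xp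
  have hcompare := hmin xm
  simp only [sub_self, inner_zero_right, mul_zero, add_zero] at hcompare
  calc (σ / (2 * η)) * ‖xp - xm‖ ^ 2 = (1 / η) * (σ / 2 * ‖xp - xm‖ ^ 2) := by ring
    _ ≤ (1 / η) * (h xp - h xm - ⟪gh xm, xp - xm⟫) := by gcongr
    _ ≤ f xm - f xp := by linarith

/-- **Sufficient decrease of one Bregman proximal point step.**
If `h` is twice continuously differentiable with `D²h(x)(v,v) ≥ σ‖v‖²` (`σ > 0`),
`η > 0`, and `x₊` globally minimizes `x ↦ f(x) + (1/η) D_h(x, x⁻)`, then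
`f(x⁻) − f(x₊) ≥ (σ/(2η))‖x₊ − x⁻‖²`. -/
theorem bregman_ppm_sufficient_decrease
    {E : Type*} [NormedAddCommGroup E] [InnerProductSpace ℝ E]
    (f h : E → ℝ) (gh : E → E) (σ η : ℝ)
    (hh : ContDiff ℝ 2 h)
    (hgh : ∀ x v : E, fderiv ℝ h x v = ⟪gh x, v⟫)
    (hσ : 0 < σ)
    (hstrong : ∀ x v : E, iteratedFDeriv ℝ 2 h x ![v, v] ≥ σ * ‖v‖ ^ 2)
    (hη : 0 < η)
    (xm xp : E)
    (hmin : ∀ x : E,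
      f xp + (1 / η) * (h xp - h xm - ⟪gh xm, xp - xm⟫) ≤
        f x + (1 / η) * (h x - h xm - ⟪gh xm, x - xm⟫)) :
    f xm - f xp ≥ (σ / (2 * η)) * ‖xp - xm‖ ^ 2 :=
  bregman_ppm_sufficient_decrease_general f h gh σ η hh hgh hstrong hη xm xp hmin
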